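/- With μ_n = (1/n)∑_{i=1}^n δ_{(i,0)} and ν_{n,n} = μ_n P_{π/(2n)} on ℝ², the ratio M₁(μ_n, ν_{n,n}) / W₁(μ_n, ν_{n,n}) tends to +∞ as n → ∞. In particular, there is no constant C > 0 such that M₁(μ, ν) ≤ C·W₁(μ, ν) for all μ ≤_c ν on ℝ². -/

import Mathlib

open MeasureTheory Filter
open scoped BoundedContinuousFunction ENNReal Topology

noncomputable section
set_option linter.unusedSectionVars false

/-- The plane with the Euclidean norm. -/
abbrev R2 : Type := EuclideanSpace ℝ (Fin 2)

/-- The point `(a, b)` of the Euclidean plane. -/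
def pt (a b : ℝ) : R2 := (WithLp.equiv 2 (Fin 2 → ℝ)).symm ![a, b]

/-- The unit vector at angle `θ`. -/
def dir (θ : ℝ) : R2 := pt (Real.cos θ) (Real.sin θ)

/-- The one-step kernel `P_θ` of the simple random walk along the line of angle `θ`. -/
def Pker (θ : ℝ) (x : R2) : Measure R2 :=
  (2 : ℝ≥0∞)⁻¹ • (Measure.dirac (x + dir θ) + Measure.dirac (x - dir θ))

/-- The measure `μ_m = (1/m) ∑_{i=1}^m δ_{(i,0)}`. -/
def muM (m : ℕ) : Measure R2 :=
  (m : ℝ≥0∞)⁻¹ • ∑ i ∈ Finset.Icc 1 m, Measure.dirac (pt i 0)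

/-- The coupling `μ(Id, P)` of `μ` with conditional law `P(x,·)` given `x`. -/
def couple (μ : Measure R2) (P : R2 → Measure R2) : Measure (R2 × R2) :=
  μ.bind (fun x => (P x).map (fun y => (x, y)))

/-- `π` is a coupling of `μ` and `ν`. -/
def IsCoupling {E F : Type*} [MeasurableSpace E] [MeasurableSpace F]
    (μ : Measure E) (ν : Measure F) (π : Measure (E × F)) : Prop :=
  IsProbabilityMeasure π ∧ π.map Prod.fst = μ ∧ π.map Prod.snd = ν

/-- `π` is a martingale coupling of `μ` and `ν`: a coupling such that
`∫ φ(x)(y - x) dπ(x,y) = 0` for every bounded continuous `φ`. -/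
def IsMartCoupling {E : Type*} [MeasurableSpace E] [NormedAddCommGroup E] [NormedSpace ℝ E]
    (μ ν : Measure E) (π : Measure (E × E)) : Prop :=
  IsCoupling μ ν π ∧ ∀ φ : E →ᵇ ℝ, ∫ p, φ p.1 • (p.2 - p.1) ∂π = 0

/-- The 1-Wasserstein distance: infimum of `∫ ‖x - y‖ dπ` over couplings. -/
def W1 {E : Type*} [MeasurableSpace E] [NormedAddCommGroup E] (μ ν : Measure E) : ℝ :=
  sInf {r | ∃ π : Measure (E × E), IsCoupling μ ν π ∧ ∫ p, ‖p.1 - p.2‖ ∂π = r}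

/-- The value `V^M_c(μ,ν)` of the martingale optimal transport problem. -/
def MOTval {E : Type*} [MeasurableSpace E] [NormedAddCommGroup E] [NormedSpace ℝ E]
    (c : E → E → ℝ) (μ ν : Measure E) : ℝ :=
  sInf {r | ∃ π : Measure (E × E), IsMartCoupling μ ν π ∧ ∫ p, c p.1 p.2 ∂π = r}

/-- Convex order: `∫ φ dμ ≤ ∫ φ dν` for every integrable convex `φ`. -/
def ConvexOrder {E : Type*} [MeasurableSpace E] [NormedAddCommGroup E] [NormedSpace ℝ E]
    (μ ν : Measure E) : Prop :=
  ∀ φ : E → ℝ, ConvexOn ℝ Set.univ φ → Integrable φ ν → Integrable φ μ →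
    ∫ x, φ x ∂μ ≤ ∫ x, φ x ∂ν

/-! ### Auxiliary material -/

section Coords

@[simp] lemma pt_apply_zero (a b : ℝ) : pt a b 0 = a := rfl
@[simp] lemma pt_apply_one (a b : ℝ) : pt a b 1 = b := rfl
@[simp] lemma R2_add_apply (x y : R2) (i : Fin 2) : (x + y) i = x i + y i := rfl
@[simp] lemma R2_sub_apply (x y : R2) (i : Fin 2) : (x - y) i = x i - y i := rfl

lemma norm_pt (a b : ℝ) : ‖pt a b‖ = Real.sqrt (a^2 + b^2) := by
  rw [EuclideanSpace.norm_eq, Fin.sum_univ_two]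
  simp [Real.norm_eq_abs, sq_abs]

lemma norm_dir (θ : ℝ) : ‖dir θ‖ = 1 := by
  rw [dir, norm_pt]
  rw [show Real.cos θ ^ 2 + Real.sin θ ^ 2 = 1 from Real.cos_sq_add_sin_sq θ]
  exact Real.sqrt_one

lemma pt_add_dir (a b θ : ℝ) : pt a b + dir θ = pt (a + Real.cos θ) (b + Real.sin θ) := by
  refine PiLp.ext fun i => ?_; fin_cases i <;> rfl

lemma pt_sub_dir (a b θ : ℝ) : pt a b - dir θ = pt (a - Real.cos θ) (b - Real.sin θ) := by
  refine PiLp.ext fun i => ?_; fin_cases i <;> rfl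

lemma pt_sub_pt (a b a' b' : ℝ) : pt a b - pt a' b' = pt (a - a') (b - b') := by
  refine PiLp.ext fun i => ?_; fin_cases i <;> rfl

lemma cont_coord (k : Fin 2) : Continuous fun x : R2 => x k :=
  (EuclideanSpace.proj (𝕜 := ℝ) k).continuous

lemma abs_coord_le (x : R2) (k : Fin 2) : |x k| ≤ ‖x‖ := by
  rw [EuclideanSpace.norm_eq, show |x k| = Real.sqrt (|x k|^2) from (Real.sqrt_sq (abs_nonneg _)).symm]
  apply Real.sqrt_le_sqrt
  rw [sq_abs]
  have h := Finset.single_le_sum (f := fun i => ‖x i‖^2) (fun i _ => sq_nonneg _) (Finset.mem_univ k)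
  simpa [Real.norm_eq_abs, sq_abs] using h

end Coords

section MeasHelpers

variable {α : Type*} [MeasurableSpace α] [MeasurableSingletonClass α]
variable {E : Type*} [NormedAddCommGroup E] [NormedSpace ℝ E]

lemma integrable_dirac' (f : α → E) (a : α) : Integrable f (Measure.dirac a) := by
  have h : f =ᵐ[Measure.dirac a] fun _ => f a := by
    rw [MeasureTheory.ae_dirac_eq a]; exact Filter.eventually_pure.2 rfl
  exact (integrable_const (f a)).congr h.symm

lemma integrable_dirac_sum {ι : Type*} (F : Finset ι) (g : ι → α) (c : ℝ≥0∞) (hc : c ≠ ⊤)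
    (f : α → E) : Integrable f (c • ∑ i ∈ F, Measure.dirac (g i)) :=
  (integrable_finset_sum_measure.2 fun i _ => integrable_dirac' f (g i)).smul_measure hc

lemma integral_dirac_sum {ι : Type*} [CompleteSpace E] (F : Finset ι) (g : ι → α) (c : ℝ≥0∞)
    (f : α → E) :
    ∫ x, f x ∂(c • ∑ i ∈ F, Measure.dirac (g i)) = c.toReal • ∑ i ∈ F, f (g i) := by
  rw [integral_smul_measure, integral_finset_sum_measure (fun i _ => integrable_dirac' f (g i))]
  simp [integral_dirac]

lemma map_dirac_sum0 {β : Type*} [MeasurableSpace β] {ι : Type*} [DecidableEq ι] (F : Finset ι)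
    (g : ι → α) {T : α → β} (hT : Measurable T) :
    (∑ i ∈ F, Measure.dirac (g i)).map T = ∑ i ∈ F, Measure.dirac (T (g i)) := by
  induction F using Finset.induction with
  | empty => simp
  | insert a' s' h ih => rw [Finset.sum_insert h, Finset.sum_insert h,
      Measure.map_add _ _ hT, Measure.map_dirac' hT, ih]

lemma dirac_sum_apply {ι : Type*} (F : Finset ι) (g : ι → α) (c : ℝ≥0∞) {s : Set α}
    (hs : MeasurableSet s) :
    (c • ∑ i ∈ F, Measure.dirac (g i)) s = c * ∑ i ∈ F, s.indicator 1 (g i) := by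
  simp [Measure.smul_apply, Measure.finset_sum_apply, Measure.dirac_apply' _ hs]

end MeasHelpers

section Main

/-- first support point abbreviation -/
def xi (i : ℕ) : R2 := pt i 0

/-- the angle -/
def th (n : ℕ) : ℝ := Real.pi / (2 * n)

/-- the step vector -/
def dd (n : ℕ) : R2 := dir (th n)

/-- the second marginal -/
def nu (n : ℕ) : Measure R2 := (muM n).bind (Pker (th n))

variable {n : ℕ}

lemma th_pos (hn : 1 ≤ n) : 0 < th n := by
  apply div_pos Real.pi_pos
  positivity

lemma th_le (hn : 1 ≤ n) : th n ≤ Real.pi / 2 := by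
  rw [th]
  apply div_le_div_of_nonneg_left Real.pi_pos.le (by norm_num)
  exact_mod_cast by omega

lemma sin_th_pos (hn : 1 ≤ n) : 0 < Real.sin (th n) := by
  apply Real.sin_pos_of_pos_of_lt_pi (th_pos hn)
  calc th n ≤ Real.pi / 2 := th_le hn
  _ < Real.pi := by linarith [Real.pi_pos]

lemma norm_dd : ‖dd n‖ = 1 := norm_dir _

lemma norm_xi (i : ℕ) : ‖xi i‖ = i := by
  rw [xi, norm_pt]
  simp [Real.sqrt_sq (Nat.cast_nonneg i)]

lemma xi_add_dd (j : ℕ) : xi j + dd n = pt (j + Real.cos (th n)) (Real.sin (th n)) := by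
  rw [xi, dd, pt_add_dir, zero_add]

lemma xi_sub_dd (j : ℕ) : xi j - dd n = pt (j - Real.cos (th n)) (-Real.sin (th n)) := by
  rw [xi, dd, pt_sub_dir, zero_sub]

lemma measurable_Pker (θ : ℝ) : Measurable (Pker θ) := by
  apply Measure.measurable_of_measurable_coe
  intro s hs
  simp only [Pker, Measure.smul_apply, Measure.add_apply, Measure.dirac_apply' _ hs,
    smul_eq_mul]
  exact (((measurable_one.indicator hs).comp (measurable_id.add_const (dir θ))).add
    ((measurable_one.indicator hs).comp (measurable_id.sub_const (dir θ)))).const_mul _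

lemma nu_eq :
    nu n = ((2 * n : ℕ) : ℝ≥0∞)⁻¹ •
      ((∑ i ∈ Finset.Icc 1 n, Measure.dirac (xi i + dd n)) +
       (∑ i ∈ Finset.Icc 1 n, Measure.dirac (xi i - dd n))) := by
  ext s hs
  rw [nu, Measure.bind_apply hs (measurable_Pker (th n)).aemeasurable]
  rw [muM, lintegral_smul_measure, lintegral_finset_sum_measure]
  simp only [lintegral_dirac]
  simp only [Pker, Measure.smul_apply, Measure.add_apply, Measure.dirac_apply' _ hs, smul_eq_mul,
    Measure.finset_sum_apply]
  have h2 : ((2*n:ℕ):ℝ≥0∞)⁻¹ = (n:ℝ≥0∞)⁻¹ * 2⁻¹ := by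
    push_cast
    rw [ENNReal.mul_inv (by simp) (by simp)]
    ring
  rw [← Finset.sum_add_distrib, h2, mul_assoc, Finset.mul_sum, Finset.mul_sum, Finset.mul_sum]
  rfl

lemma two_n_inv_ne_top (hn : 1 ≤ n) : ((2 * n : ℕ) : ℝ≥0∞)⁻¹ ≠ ⊤ := by
  simp [ENNReal.inv_ne_top]
  omega

lemma n_inv_ne_top (hn : 1 ≤ n) : ((n : ℕ) : ℝ≥0∞)⁻¹ ≠ ⊤ := by
  simp [ENNReal.inv_ne_top]
  omega

lemma isProb_two_sum (hn : 1 ≤ n) {β : Type*} [MeasurableSpace β] (g h : ℕ → β) :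
    IsProbabilityMeasure (((2 * n : ℕ) : ℝ≥0∞)⁻¹ •
      ((∑ i ∈ Finset.Icc 1 n, Measure.dirac (g i)) +
       (∑ i ∈ Finset.Icc 1 n, Measure.dirac (h i)))) := by
  constructor
  rw [Measure.smul_apply, Measure.add_apply, Measure.finset_sum_apply, Measure.finset_sum_apply]
  simp only [Measure.dirac_apply_of_mem (Set.mem_univ _), Finset.sum_const, Nat.card_Icc,
    Nat.add_sub_cancel, nsmul_eq_mul, mul_one, smul_eq_mul]
  rw [← two_mul, show ((2:ℝ≥0∞) * (n:ℝ≥0∞)) = ((2*n : ℕ) : ℝ≥0∞) by push_cast; ring]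
  exact ENNReal.inv_mul_cancel (by exact_mod_cast (by omega : 2*n ≠ 0))
    (by simp [ENNReal.mul_eq_top])

lemma isProb_muM (hn : 1 ≤ n) : IsProbabilityMeasure (muM n) := by
  constructor
  rw [muM, Measure.smul_apply, Measure.finset_sum_apply]
  simp only [Measure.dirac_apply_of_mem (Set.mem_univ _), Finset.sum_const, Nat.card_Icc,
    Nat.add_sub_cancel, nsmul_eq_mul, mul_one, smul_eq_mul]
  exact ENNReal.inv_mul_cancel (by exact_mod_cast (by omega : n ≠ 0)) (by simp)

lemma isProb_nu (hn : 1 ≤ n) : IsProbabilityMeasure (nu n) := by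
  rw [nu_eq]
  exact isProb_two_sum hn _ _


lemma integral_muM (f : R2 → ℝ) :
    ∫ x, f x ∂(muM n) = (n : ℝ)⁻¹ * ∑ i ∈ Finset.Icc 1 n, f (xi i) := by
  rw [muM, integral_dirac_sum]
  simp [ENNReal.toReal_inv, xi]

lemma integral_nu (f : R2 → ℝ) :
    ∫ x, f x ∂(nu n) = (2 * (n:ℝ))⁻¹ *
      ((∑ i ∈ Finset.Icc 1 n, f (xi i + dd n)) + ∑ i ∈ Finset.Icc 1 n, f (xi i - dd n)) := by
  rw [nu_eq, integral_smul_measure,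
    integral_add_measure (integrable_finset_sum_measure.2 fun i _ => integrable_dirac' f _)
      (integrable_finset_sum_measure.2 fun i _ => integrable_dirac' f _),
    integral_finset_sum_measure (fun i _ => integrable_dirac' f _),
    integral_finset_sum_measure (fun i _ => integrable_dirac' f _)]
  simp [ENNReal.toReal_inv, integral_dirac]

lemma integrable_muM (hn : 1 ≤ n) (f : R2 → ℝ) : Integrable f (muM n) := by
  rw [muM]
  exact integrable_dirac_sum _ _ _ (n_inv_ne_top hn) f

lemma integrable_nu (hn : 1 ≤ n) (f : R2 → ℝ) : Integrable f (nu n) := by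
  rw [nu_eq]
  refine Integrable.smul_measure ?_ (two_n_inv_ne_top hn)
  rw [integrable_add_measure]
  exact ⟨integrable_finset_sum_measure.2 fun i _ => integrable_dirac' f _,
    integrable_finset_sum_measure.2 fun i _ => integrable_dirac' f _⟩

lemma integral_fst_marg {π : Measure (R2 × R2)} (h1 : π.map Prod.fst = muM n)
    {f : R2 → ℝ} (hf : Continuous f) :
    ∫ p, f p.1 ∂π = (n : ℝ)⁻¹ * ∑ i ∈ Finset.Icc 1 n, f (xi i) := by
  rw [← integral_muM, ← h1,
    integral_map measurable_fst.aemeasurable hf.aestronglyMeasurable]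

lemma integral_snd_marg {π : Measure (R2 × R2)} (h2 : π.map Prod.snd = nu n)
    {f : R2 → ℝ} (hf : Continuous f) :
    ∫ p, f p.2 ∂π = (2 * (n:ℝ))⁻¹ *
      ((∑ i ∈ Finset.Icc 1 n, f (xi i + dd n)) + ∑ i ∈ Finset.Icc 1 n, f (xi i - dd n)) := by
  rw [← integral_nu, ← h2,
    integral_map measurable_snd.aemeasurable hf.aestronglyMeasurable]

lemma mem_S_ae {π : Measure (R2 × R2)} (h1 : π.map Prod.fst = muM n) :
    ∀ᵐ p ∂π, ∃ i ∈ Finset.Icc 1 n, p.1 = xi i := by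
  classical
  set A : Finset R2 := (Finset.Icc 1 n).image xi with hA
  have hAm : MeasurableSet (A : Set R2) := A.measurableSet
  rw [ae_iff]
  have hset : {p : R2 × R2 | ¬ ∃ i ∈ Finset.Icc 1 n, p.1 = xi i} = Prod.fst ⁻¹' (↑A)ᶜ := by
    ext p
    simp [hA, eq_comm]
  rw [hset, ← Measure.map_apply measurable_fst hAm.compl, h1, muM,
    dirac_sum_apply _ _ _ hAm.compl]
  rw [Finset.sum_eq_zero, mul_zero]
  intro i hi
  apply Set.indicator_of_notMem
  simp only [Set.mem_compl_iff, not_not, Finset.coe_image, Set.mem_image, hA]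
  exact ⟨i, by simpa using hi, rfl⟩

lemma mem_T_ae {π : Measure (R2 × R2)} (h2 : π.map Prod.snd = nu n) :
    ∀ᵐ p ∂π, ∃ j ∈ Finset.Icc 1 n, p.2 = xi j + dd n ∨ p.2 = xi j - dd n := by
  classical
  set A : Finset R2 := (Finset.Icc 1 n).image (fun j => xi j + dd n) ∪
    (Finset.Icc 1 n).image (fun j => xi j - dd n) with hA
  have hAm : MeasurableSet (A : Set R2) := A.measurableSet
  rw [ae_iff]
  have hset : {p : R2 × R2 | ¬ ∃ j ∈ Finset.Icc 1 n, p.2 = xi j + dd n ∨ p.2 = xi j - dd n}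
      = Prod.snd ⁻¹' (↑A)ᶜ := by
    ext p
    simp only [Set.mem_setOf_eq, Set.mem_preimage, Set.mem_compl_iff, hA, Finset.coe_union,
      Set.mem_union, Finset.coe_image, Set.mem_image, Finset.mem_coe]
    constructor
    · intro h
      rintro (⟨j, hj, hje⟩ | ⟨j, hj, hje⟩) <;> exact h ⟨j, hj, by rw [← hje]; tauto⟩
    · rintro h ⟨j, hj, (hje | hje)⟩
      · exact h (Or.inl ⟨j, hj, hje.symm⟩)
      · exact h (Or.inr ⟨j, hj, hje.symm⟩)
  rw [hset, ← Measure.map_apply measurable_snd hAm.compl, h2, nu_eq]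
  rw [Measure.smul_apply, Measure.add_apply, Measure.finset_sum_apply, Measure.finset_sum_apply]
  simp only [Measure.dirac_apply' _ hAm.compl]
  rw [Finset.sum_eq_zero, Finset.sum_eq_zero, add_zero, smul_eq_mul, mul_zero]
  · intro i hi
    apply Set.indicator_of_notMem
    simp only [Set.mem_compl_iff, not_not, hA, Finset.coe_union, Set.mem_union, Finset.coe_image,
      Set.mem_image, Finset.mem_coe]
    exact Or.inr ⟨i, hi, rfl⟩
  · intro i hi
    apply Set.indicator_of_notMem
    simp only [Set.mem_compl_iff, not_not, hA, Finset.coe_union, Set.mem_union, Finset.coe_image,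
      Set.mem_image, Finset.mem_coe]
    exact Or.inl ⟨i, hi, rfl⟩


lemma mart_cost (hn : 1 ≤ n) {π : Measure (R2 × R2)}
    (hπ : IsMartCoupling (muM n) (nu n) π) :
    ∫ p, ‖p.1 - p.2‖ ∂π = 1 := by
  obtain ⟨⟨hprob, hfst, hsnd⟩, hmart⟩ := hπ
  haveI := hprob
  set c := Real.cos (th n) with hc
  set s := Real.sin (th n) with hs
  have hs0 : 0 < s := sin_th_pos hn
  have hone : c ^ 2 + s ^ 2 = 1 := Real.cos_sq_add_sin_sq _
  have hae : ∀ᵐ p ∂π, (∃ i ∈ Finset.Icc 1 n, p.1 = xi i) ∧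
      (∃ j ∈ Finset.Icc 1 n, p.2 = xi j + dd n ∨ p.2 = xi j - dd n) :=
    (mem_S_ae hfst).and (mem_T_ae hsnd)
  set J : R2 × R2 → ℝ := fun p => p.2 0 - (c / s) * p.2 1 with hJ
  -- pointwise facts on the support
  have haeP : ∀ᵐ p ∂π, |p.1 0| ≤ (n:ℝ) ∧ p.1 1 = 0 ∧ |p.2 0| ≤ (n:ℝ) + 1 ∧ |p.2 1| ≤ 1 ∧
      |J p| ≤ (n:ℝ) ∧ ‖p.1‖ ≤ (n:ℝ) ∧ ‖p.2‖ ≤ (n:ℝ) + 1 := by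
    filter_upwards [hae] with p hp
    obtain ⟨⟨i, hi, h1⟩, ⟨j, hj, h2⟩⟩ := hp
    rw [Finset.mem_Icc] at hi hj
    have hin : (i:ℝ) ≤ n := by exact_mod_cast hi.2
    have hi0 : (0:ℝ) ≤ i := Nat.cast_nonneg i
    have hjn : (j:ℝ) ≤ n := by exact_mod_cast hj.2
    have hj0 : (0:ℝ) ≤ j := Nat.cast_nonneg j
    have hcb : |c| ≤ 1 := Real.abs_cos_le_one _
    have hsb : |s| ≤ 1 := Real.abs_sin_le_one _
    rw [abs_le] at hcb hsb
    have hco : (p.2 0 = (j:ℝ) + c ∧ p.2 1 = s) ∨ (p.2 0 = (j:ℝ) - c ∧ p.2 1 = -s) := by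
      rcases h2 with h2 | h2
      · left; rw [h2, xi_add_dd]; exact ⟨rfl, rfl⟩
      · right; rw [h2, xi_sub_dd]; exact ⟨rfl, rfl⟩
    have hJval : J p = j := by
      rcases hco with ⟨h20, h21⟩ | ⟨h20, h21⟩
      · rw [hJ]; simp only [h20, h21]; field_simp; ring
      · rw [hJ]; simp only [h20, h21]; field_simp; ring
    have hx0 : p.1 0 = i := by rw [h1, xi, pt_apply_zero]
    refine ⟨?_, ?_, ?_, ?_, ?_, ?_, ?_⟩
    · rw [hx0, abs_of_nonneg hi0]; exact hin
    · rw [h1]; rfl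
    · rcases hco with ⟨h20, _⟩ | ⟨h20, _⟩
      · rw [h20, abs_le]; constructor <;> linarith
      · rw [h20, abs_le]; constructor <;> linarith
    · rcases hco with ⟨_, h21⟩ | ⟨_, h21⟩
      · rw [h21, abs_le]; constructor <;> linarith
      · rw [h21, abs_le]; constructor <;> linarith
    · rw [hJval, abs_of_nonneg hj0]; exact hjn
    · rw [h1, norm_xi]; exact hin
    · rcases h2 with h2 | h2
      · rw [h2]; exact (norm_add_le _ _).trans (by rw [norm_xi, norm_dd]; linarith)
      · rw [h2]; exact (norm_sub_le _ _).trans (by rw [norm_xi, norm_dd]; linarith)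
  -- integrability helper
  have hbd : ∀ (f : R2 × R2 → ℝ) (C : ℝ), Continuous f →
      (∀ᵐ p ∂π, |f p| ≤ C) → Integrable f π := fun f C hf h =>
    Integrable.mono' (integrable_const C) hf.aestronglyMeasurable
      (by simpa [Real.norm_eq_abs] using h)
  have hcont0 : Continuous fun p : R2 × R2 => p.1 0 := (cont_coord 0).comp continuous_fst
  have hcontY0 : Continuous fun p : R2 × R2 => p.2 0 := (cont_coord 0).comp continuous_snd
  have hcontY1 : Continuous fun p : R2 × R2 => p.2 1 := (cont_coord 1).comp continuous_snd
  have hcontJ : Continuous J := hcontY0.sub (continuous_const.mul hcontY1)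
  have intX2 : Integrable (fun p : R2 × R2 => (p.1 0)^2) π := by
    refine hbd _ ((n:ℝ)^2) (hcont0.pow 2) ?_
    filter_upwards [haeP] with p hp
    rw [abs_of_nonneg (sq_nonneg _)]
    nlinarith [hp.1, abs_nonneg (p.1 0), sq_abs (p.1 0)]
  have intJ2 : Integrable (fun p : R2 × R2 => (J p)^2) π := by
    refine hbd _ ((n:ℝ)^2) (hcontJ.pow 2) ?_
    filter_upwards [haeP] with p hp
    rw [abs_of_nonneg (sq_nonneg _)]
    nlinarith [hp.2.2.2.2.1, abs_nonneg (J p), sq_abs (J p)]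
  have intXY0 : Integrable (fun p : R2 × R2 => p.1 0 * p.2 0) π := by
    refine hbd _ ((n:ℝ) * (n+1)) (hcont0.mul hcontY0) ?_
    filter_upwards [haeP] with p hp
    rw [abs_mul]
    exact mul_le_mul hp.1 hp.2.2.1 (abs_nonneg _) (Nat.cast_nonneg n)
  have intXY1 : Integrable (fun p : R2 × R2 => p.1 0 * p.2 1) π := by
    refine hbd _ ((n:ℝ) * 1) (hcont0.mul hcontY1) ?_
    filter_upwards [haeP] with p hp
    rw [abs_mul]
    exact mul_le_mul hp.1 hp.2.2.2.1 (abs_nonneg _) (Nat.cast_nonneg n)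
  have intXJ : Integrable (fun p : R2 × R2 => p.1 0 * J p) π := by
    refine hbd _ ((n:ℝ) * n) (hcont0.mul hcontJ) ?_
    filter_upwards [haeP] with p hp
    rw [abs_mul]
    exact mul_le_mul hp.1 hp.2.2.2.2.1 (abs_nonneg _) (Nat.cast_nonneg n)
  -- the martingale property applied to a truncation of the first coordinate
  set R : ℝ := n + 2 with hR
  set φ0 : ℝ → ℝ := fun t => max (-R) (min R t) with hφ0
  have hφ0cont : Continuous φ0 := continuous_const.max (continuous_const.min continuous_id)
  have hφ0bd : ∀ t, ‖φ0 t‖ ≤ R := by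
    intro t
    rw [Real.norm_eq_abs, abs_le, hφ0]
    have hR0 : (0:ℝ) ≤ R := by rw [hR]; positivity
    exact ⟨le_max_left _ _ |>.trans_eq' (by ring_nf), max_le (by linarith) (min_le_left _ _)⟩
  have hφ0eq : ∀ t : ℝ, |t| ≤ R → φ0 t = t := by
    intro t ht
    rw [abs_le] at ht
    rw [hφ0]
    simp only
    rw [min_eq_right ht.2, max_eq_right ht.1]
  set φ : R2 →ᵇ ℝ := BoundedContinuousFunction.ofNormedAddCommGroup (fun x => φ0 (x 0))
    (hφ0cont.comp (cont_coord 0)) R (fun x => hφ0bd _) with hφ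
  have hφapp : ∀ x : R2, φ x = φ0 (x 0) := fun _ => rfl
  have hintφ : Integrable (fun p : R2 × R2 => φ p.1 • (p.2 - p.1)) π := by
    apply Integrable.mono' (integrable_const (R * (2*(n:ℝ) + 1)))
      (((φ.continuous.comp continuous_fst).smul (continuous_snd.sub continuous_fst)).aestronglyMeasurable)
    filter_upwards [haeP] with p hp
    show ‖φ p.1 • (p.2 - p.1)‖ ≤ R * (2*(n:ℝ) + 1)
    rw [norm_smul]
    have h1 : ‖φ p.1‖ ≤ R := hφ0bd _
    have h2 : ‖p.2 - p.1‖ ≤ 2*(n:ℝ) + 1 := by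
      refine (norm_sub_le _ _).trans ?_
      linarith [hp.2.2.2.2.2.1, hp.2.2.2.2.2.2]
    have hR0 : (0:ℝ) ≤ R := by rw [hR]; positivity
    exact mul_le_mul h1 h2 (norm_nonneg _) hR0
  have hmk : ∀ k : Fin 2, ∫ p, φ p.1 * ((p.2 - p.1) k) ∂π = 0 := by
    intro k
    have h := (EuclideanSpace.proj (𝕜 := ℝ) k).integral_comp_comm hintφ
    rw [hmart φ] at h
    simpa using h
  have haeφ : ∀ᵐ p ∂π, φ p.1 = p.1 0 := by
    filter_upwards [haeP] with p hp
    rw [hφapp]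
    exact hφ0eq _ (hp.1.trans (by rw [hR]; linarith))
  have E1 : ∫ p, p.1 0 * (p.2 0 - p.1 0) ∂π = 0 := by
    rw [← hmk 0]
    apply integral_congr_ae
    filter_upwards [haeφ] with p hp
    rw [hp, R2_sub_apply]
  have E2 : ∫ p, p.1 0 * p.2 1 ∂π = 0 := by
    rw [← hmk 1]
    apply integral_congr_ae
    filter_upwards [haeφ, haeP] with p hp hp2
    rw [hp, R2_sub_apply, hp2.2.1, sub_zero]
  -- the three second moments
  set Q : ℝ := (n:ℝ)⁻¹ * ∑ i ∈ Finset.Icc 1 n, (i:ℝ)^2 with hQ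
  have I1 : ∫ p, (p.1 0)^2 ∂π = Q := by
    rw [show (fun p : R2 × R2 => (p.1 0)^2) = fun p => (fun x : R2 => (x 0)^2) p.1 from rfl,
      integral_fst_marg (f := fun x : R2 => (x 0)^2) hfst ((cont_coord 0).pow 2), hQ]
    simp [xi]
  have I2 : ∫ p, (J p)^2 ∂π = Q := by
    rw [show (fun p : R2 × R2 => (J p)^2)
        = fun p => (fun y : R2 => (y 0 - (c/s) * y 1)^2) p.2 from rfl,
      integral_snd_marg (f := fun y : R2 => (y 0 - (c/s) * y 1)^2) hsnd (((cont_coord 0).sub (continuous_const.mul (cont_coord 1))).pow 2)]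
    have hv1 : ∀ i : ℕ, ((xi i + dd n) 0 - (c/s) * (xi i + dd n) 1)^2 = (i:ℝ)^2 := by
      intro i
      rw [xi_add_dd, pt_apply_zero, pt_apply_one]
      field_simp
      rw [← hc, ← hs]; ring
    have hv2 : ∀ i : ℕ, ((xi i - dd n) 0 - (c/s) * (xi i - dd n) 1)^2 = (i:ℝ)^2 := by
      intro i
      rw [xi_sub_dd, pt_apply_zero, pt_apply_one]
      field_simp
      ring
    simp only [hv1, hv2]
    rw [hQ]
    have hne : (n:ℝ) ≠ 0 := by exact_mod_cast (by omega : n ≠ 0)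
    field_simp
    ring
  have hXY0 : ∫ p, p.1 0 * p.2 0 ∂π = Q := by
    have h := E1
    rw [show (fun p : R2 × R2 => p.1 0 * (p.2 0 - p.1 0))
        = fun p => p.1 0 * p.2 0 - (p.1 0)^2 from by funext p; ring,
      integral_sub intXY0 intX2, I1] at h
    linarith
  have I3 : ∫ p, p.1 0 * J p ∂π = Q := by
    rw [show (fun p : R2 × R2 => p.1 0 * J p)
        = fun p => p.1 0 * p.2 0 - (c/s) * (p.1 0 * p.2 1) from by
          funext p; rw [hJ]; ring,
      integral_sub intXY0 (intXY1.const_mul _), integral_const_mul, hXY0, E2]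
    ring
  have hcomb : (fun p : R2 × R2 => (p.1 0 - J p)^2)
      = fun p => ((p.1 0)^2 - 2*(p.1 0 * J p)) + (J p)^2 := by
    funext p; ring
  have intA : Integrable (fun p : R2 × R2 => (p.1 0)^2 - 2*(p.1 0 * J p)) π := by
    exact intX2.sub (intXJ.const_mul 2)
  have intsq : Integrable (fun p : R2 × R2 => (p.1 0 - J p)^2) π := by
    rw [hcomb]; exact intA.add intJ2
  have I4 : ∫ p, (p.1 0 - J p)^2 ∂π = 0 := by
    rw [hcomb, integral_add intA intJ2,
      integral_sub intX2 (intXJ.const_mul 2), integral_const_mul, I1, I2, I3]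
    ring
  have hXJ : ∀ᵐ p ∂π, p.1 0 = J p := by
    have h0 := (integral_eq_zero_iff_of_nonneg_ae
      (Filter.Eventually.of_forall fun p => sq_nonneg _) intsq).1 I4
    filter_upwards [h0] with p hp
    have := pow_eq_zero_iff (n := 2) (by norm_num) |>.1 hp
    linarith [this]
  -- conclusion
  have hnorm1 : ∀ᵐ p ∂π, ‖p.1 - p.2‖ = 1 := by
    filter_upwards [hae, hXJ] with p hp h0
    obtain ⟨⟨i, hi, h1⟩, ⟨j, hj, h2⟩⟩ := hp
    have hx0 : p.1 0 = i := by rw [h1, xi, pt_apply_zero]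
    rcases h2 with h2 | h2
    · have hJv : J p = j := by
        rw [hJ]; simp only [h2, xi_add_dd, pt_apply_zero, pt_apply_one, ← hc, ← hs]
        field_simp
        ring
      have hij : (i:ℝ) = j := by rw [← hx0, h0, hJv]
      rw [h1, h2, xi_add_dd, xi, pt_sub_pt,
        show (i:ℝ) - ((j:ℝ) + c) = -c from by rw [hij]; ring,
        show (0:ℝ) - s = -s from by ring, norm_pt]
      rw [show (-c)^2 + (-s)^2 = 1 from by rw [← hone]; ring]
      exact Real.sqrt_one
    · have hJv : J p = j := by
        rw [hJ]; simp only [h2, xi_sub_dd, pt_apply_zero, pt_apply_one, ← hc, ← hs]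
        field_simp
        ring
      have hij : (i:ℝ) = j := by rw [← hx0, h0, hJv]
      rw [h1, h2, xi_sub_dd, xi, pt_sub_pt,
        show (i:ℝ) - ((j:ℝ) - c) = c from by rw [hij]; ring,
        show (0:ℝ) - -s = s from by ring, norm_pt, hone]
      exact Real.sqrt_one
  have hfin : ∫ p, ‖p.1 - p.2‖ ∂π = ∫ (_ : R2 × R2), (1:ℝ) ∂π :=
    integral_congr_ae (by filter_upwards [hnorm1] with p hp; exact hp)
  rw [hfin]
  simp


/-- the canonical martingale coupling -/
def pi0 (n : ℕ) : Measure (R2 × R2) :=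
  ((2 * n : ℕ) : ℝ≥0∞)⁻¹ •
    ((∑ i ∈ Finset.Icc 1 n, Measure.dirac (xi i, xi i + dd n)) +
     ∑ i ∈ Finset.Icc 1 n, Measure.dirac (xi i, xi i - dd n))

lemma half_sum (hn : 1 ≤ n) (m : Measure R2) :
    ((2 * n : ℕ) : ℝ≥0∞)⁻¹ • (m + m) = ((n : ℕ) : ℝ≥0∞)⁻¹ • m := by
  rw [smul_add, ← add_smul]
  congr 1
  rw [← two_mul]
  push_cast
  rw [ENNReal.mul_inv (by simp) (by simp), ← mul_assoc,
    ENNReal.mul_inv_cancel (by norm_num) (by norm_num), one_mul]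

lemma pi0_map_fst (hn : 1 ≤ n) : (pi0 n).map Prod.fst = muM n := by
  classical
  rw [pi0, Measure.map_smul, Measure.map_add _ _ measurable_fst,
    map_dirac_sum0 _ _ measurable_fst, map_dirac_sum0 _ _ measurable_fst]
  simp only
  rw [half_sum hn, muM]
  rfl

lemma pi0_map_snd (hn : 1 ≤ n) : (pi0 n).map Prod.snd = nu n := by
  classical
  rw [pi0, Measure.map_smul, Measure.map_add _ _ measurable_snd,
    map_dirac_sum0 _ _ measurable_snd, map_dirac_sum0 _ _ measurable_snd, nu_eq]

lemma pi0_mart (hn : 1 ≤ n) : IsMartCoupling (muM n) (nu n) (pi0 n) := by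
  refine ⟨⟨isProb_two_sum hn _ _, pi0_map_fst hn, pi0_map_snd hn⟩, ?_⟩
  intro φ
  rw [pi0, integral_smul_measure,
    integral_add_measure (integrable_finset_sum_measure.2 fun i _ => _root_.integrable_dirac' _ _)
      (integrable_finset_sum_measure.2 fun i _ => _root_.integrable_dirac' _ _),
    integral_finset_sum_measure (fun i _ => _root_.integrable_dirac' _ _),
    integral_finset_sum_measure (fun i _ => _root_.integrable_dirac' _ _)]
  simp only [integral_dirac]
  rw [← Finset.sum_add_distrib]
  rw [Finset.sum_eq_zero, smul_zero]
  intro i _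
  simp only [add_sub_cancel_left]
  rw [show xi i - dd n - xi i = -(dd n) from by abel, smul_neg, add_neg_cancel]

lemma MOT_one (hn : 1 ≤ n) : MOTval (fun x y => ‖x - y‖) (muM n) (nu n) = 1 := by
  have hset : {r | ∃ π : Measure (R2 × R2), IsMartCoupling (muM n) (nu n) π ∧
      ∫ p, ‖p.1 - p.2‖ ∂π = r} = {1} := by
    ext r
    simp only [Set.mem_setOf_eq, Set.mem_singleton_iff]
    constructor
    · rintro ⟨π, hπ, hr⟩
      rw [← hr]
      exact mart_cost hn hπ
    · rintro rfl
      exact ⟨pi0 n, pi0_mart hn, mart_cost hn (pi0_mart hn)⟩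
  rw [MOTval, hset, csInf_singleton]


/-- upper target of `x_i` in the cheap coupling -/
def up (n i : ℕ) : R2 := if i = 1 then xi 1 - dd n else xi (i-1) + dd n

/-- lower target of `x_i` in the cheap coupling -/
def lo (n i : ℕ) : R2 := if i = n then xi n + dd n else xi (i+1) - dd n

/-- the cheap (non-martingale) coupling -/
def pi1 (n : ℕ) : Measure (R2 × R2) :=
  ((2 * n : ℕ) : ℝ≥0∞)⁻¹ •
    ((∑ i ∈ Finset.Icc 1 n, Measure.dirac (xi i, up n i)) +
     ∑ i ∈ Finset.Icc 1 n, Measure.dirac (xi i, lo n i))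

lemma sum_up (hn : 1 ≤ n) {M : Type*} [AddCommMonoid M] (f : R2 → M) :
    ∑ i ∈ Finset.Icc 1 n, f (up n i)
      = f (xi 1 - dd n) + ∑ j ∈ Finset.Icc 1 (n-1), f (xi j + dd n) := by
  classical
  rw [← Finset.add_sum_erase _ _ (Finset.mem_Icc.2 ⟨le_rfl, hn⟩)]
  congr 1
  rw [Finset.Icc_erase_left]
  refine Finset.sum_bij' (fun a _ => a - 1) (fun a _ => a + 1) ?_ ?_ ?_ ?_ ?_
  · intro a ha; simp at ha ⊢ <;> omega
  · intro a ha; simp at ha ⊢ <;> omega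
  · intro a ha; simp at ha ⊢ <;> omega
  · intro a ha; simp at ha ⊢ <;> omega
  · intro a ha; simp only [Finset.mem_Ioc] at ha; simp only [up]; rw [if_neg (by omega)]

lemma sum_lo (hn : 1 ≤ n) {M : Type*} [AddCommMonoid M] (f : R2 → M) :
    ∑ i ∈ Finset.Icc 1 n, f (lo n i)
      = f (xi n + dd n) + ∑ j ∈ Finset.Ioc 1 n, f (xi j - dd n) := by
  classical
  rw [← Finset.add_sum_erase _ _ (Finset.mem_Icc.2 ⟨hn, le_rfl⟩)]
  congr 1
  · simp [lo]
  · rw [Finset.Icc_erase_right]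
    refine Finset.sum_bij' (fun a _ => a + 1) (fun a _ => a - 1) ?_ ?_ ?_ ?_ ?_
    · intro a ha; simp at ha ⊢ <;> omega
    · intro a ha; simp at ha ⊢ <;> omega
    · intro a ha; simp at ha ⊢ <;> omega
    · intro a ha; simp at ha ⊢ <;> omega
    · intro a ha; simp only [Finset.mem_Ico] at ha; simp only [lo]; rw [if_neg (by omega)]

lemma sum_up_lo (hn : 1 ≤ n) {M : Type*} [AddCommMonoid M] (f : R2 → M) :
    ((∑ i ∈ Finset.Icc 1 n, f (up n i)) + ∑ i ∈ Finset.Icc 1 n, f (lo n i))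
      = (∑ j ∈ Finset.Icc 1 n, f (xi j + dd n)) + ∑ j ∈ Finset.Icc 1 n, f (xi j - dd n) := by
  classical
  rw [sum_up hn, sum_lo hn]
  have ha : ∑ j ∈ Finset.Icc 1 n, f (xi j + dd n)
      = (∑ j ∈ Finset.Icc 1 (n-1), f (xi j + dd n)) + f (xi n + dd n) := by
    conv_lhs => rw [show n = n - 1 + 1 from by omega]
    rw [Finset.sum_Icc_succ_top (by omega)]
    rw [show n - 1 + 1 = n from by omega]
  have hb : ∑ j ∈ Finset.Icc 1 n, f (xi j - dd n)
      = f (xi 1 - dd n) + ∑ j ∈ Finset.Ioc 1 n, f (xi j - dd n) := by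
    rw [← Finset.add_sum_erase _ _ (Finset.mem_Icc.2 ⟨le_rfl, hn⟩), Finset.Icc_erase_left]
  rw [ha, hb]
  abel

lemma pi1_coupling (hn : 1 ≤ n) : IsCoupling (muM n) (nu n) (pi1 n) := by
  classical
  refine ⟨isProb_two_sum hn _ _, ?_, ?_⟩
  · rw [pi1, Measure.map_smul, Measure.map_add _ _ measurable_fst,
      map_dirac_sum0 _ _ measurable_fst, map_dirac_sum0 _ _ measurable_fst]
    simp only
    rw [half_sum hn, muM]
    rfl
  · rw [pi1, Measure.map_smul, Measure.map_add _ _ measurable_snd,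
      map_dirac_sum0 _ _ measurable_snd, map_dirac_sum0 _ _ measurable_snd, nu_eq]
    simp only
    rw [sum_up_lo hn (fun y => Measure.dirac y)]

lemma norm_step (hn : 1 ≤ n) :
    Real.sqrt ((1 - Real.cos (th n))^2 + Real.sin (th n)^2) ≤ th n := by
  have h1 : 1 - (th n)^2/2 ≤ Real.cos (th n) := Real.one_sub_sq_div_two_le_cos
  have h2 : (1 - Real.cos (th n))^2 + Real.sin (th n)^2 = 2 - 2 * Real.cos (th n) := by
    have := Real.cos_sq_add_sin_sq (th n)
    nlinarith [this]
  rw [h2]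
  have h3 : 2 - 2 * Real.cos (th n) ≤ (th n)^2 := by nlinarith
  calc Real.sqrt (2 - 2 * Real.cos (th n)) ≤ Real.sqrt ((th n)^2) := Real.sqrt_le_sqrt h3
    _ = th n := Real.sqrt_sq (th_pos hn).le

lemma cost_pi1 (hn : 1 ≤ n) : ∫ p, ‖p.1 - p.2‖ ∂(pi1 n) ≤ 3 / n := by
  classical
  rw [pi1, integral_smul_measure,
    integral_add_measure (integrable_finset_sum_measure.2 fun i _ => _root_.integrable_dirac' _ _)
      (integrable_finset_sum_measure.2 fun i _ => _root_.integrable_dirac' _ _),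
    integral_finset_sum_measure (fun i _ => _root_.integrable_dirac' _ _),
    integral_finset_sum_measure (fun i _ => _root_.integrable_dirac' _ _)]
  simp only [integral_dirac]
  have hn0 : (0:ℝ) < n := by exact_mod_cast (by omega : 0 < n)
  have hth : 0 < th n := th_pos hn
  have hup : ∑ i ∈ Finset.Icc 1 n, ‖xi i - up n i‖ ≤ 1 + n * th n := by
    rw [← Finset.add_sum_erase _ _ (Finset.mem_Icc.2 ⟨le_rfl, hn⟩), Finset.Icc_erase_left]
    have h1 : ‖xi 1 - up n 1‖ = 1 := by
      rw [show up n 1 = xi 1 - dd n from by simp [up], sub_sub_cancel, norm_dd]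
    have h2 : ∀ i ∈ Finset.Ioc 1 n, ‖xi i - up n i‖ ≤ th n := by
      intro i hi
      rw [Finset.mem_Ioc] at hi
      simp only [up]
      rw [if_neg (by omega), xi_add_dd, xi, pt_sub_pt]
      rw [show (i:ℝ) - (((i-1:ℕ):ℝ) + Real.cos (th n)) = 1 - Real.cos (th n) from by
        rw [Nat.cast_sub (by omega)]; push_cast; ring,
        show (0:ℝ) - Real.sin (th n) = -Real.sin (th n) from by ring, norm_pt]
      calc Real.sqrt ((1 - Real.cos (th n))^2 + (-Real.sin (th n))^2)
          = Real.sqrt ((1 - Real.cos (th n))^2 + Real.sin (th n)^2) := by ring_nf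
        _ ≤ th n := norm_step hn
    calc ‖xi 1 - up n 1‖ + ∑ i ∈ Finset.Ioc 1 n, ‖xi i - up n i‖
        ≤ 1 + ∑ i ∈ Finset.Ioc 1 n, th n := by
          rw [h1]; gcongr with i hi; exact h2 i hi
      _ = 1 + ((n-1:ℕ):ℝ) * th n := by
          rw [Finset.sum_const, Nat.card_Ioc, nsmul_eq_mul]
      _ ≤ 1 + n * th n := by
          have h5 : ((n-1:ℕ):ℝ) ≤ (n:ℝ) := by exact_mod_cast Nat.sub_le n 1
          nlinarith
  have hlo : ∑ i ∈ Finset.Icc 1 n, ‖xi i - lo n i‖ ≤ 1 + n * th n := by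
    rw [← Finset.add_sum_erase _ _ (Finset.mem_Icc.2 ⟨hn, le_rfl⟩), Finset.Icc_erase_right]
    have h1 : ‖xi n - lo n n‖ = 1 := by
      rw [show lo n n = xi n + dd n from by simp [lo],
        show xi n - (xi n + dd n) = -(dd n) from by abel, norm_neg, norm_dd]
    have h2 : ∀ i ∈ Finset.Ico 1 n, ‖xi i - lo n i‖ ≤ th n := by
      intro i hi
      rw [Finset.mem_Ico] at hi
      simp only [lo]
      rw [if_neg (by omega), xi_sub_dd, xi, pt_sub_pt]
      rw [show (i:ℝ) - (((i+1:ℕ):ℝ) - Real.cos (th n)) = -(1 - Real.cos (th n)) from by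
        push_cast; ring,
        show (0:ℝ) - -Real.sin (th n) = Real.sin (th n) from by ring, norm_pt]
      calc Real.sqrt ((-(1 - Real.cos (th n)))^2 + Real.sin (th n)^2)
          = Real.sqrt ((1 - Real.cos (th n))^2 + Real.sin (th n)^2) := by ring_nf
        _ ≤ th n := norm_step hn
    calc ‖xi n - lo n n‖ + ∑ i ∈ Finset.Ico 1 n, ‖xi i - lo n i‖
        ≤ 1 + ∑ i ∈ Finset.Ico 1 n, th n := by
          rw [h1]; gcongr with i hi; exact h2 i hi
      _ = 1 + ((n-1:ℕ):ℝ) * th n := by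
          rw [Finset.sum_const, Nat.card_Ico, nsmul_eq_mul]
      _ ≤ 1 + n * th n := by
          have h5 : ((n-1:ℕ):ℝ) ≤ (n:ℝ) := by exact_mod_cast Nat.sub_le n 1
          nlinarith
  have htoReal : (((2 * n : ℕ) : ℝ≥0∞)⁻¹).toReal = (2 * (n:ℝ))⁻¹ := by
    simp [ENNReal.toReal_inv]
  rw [htoReal, smul_eq_mul]
  have hsum : (∑ i ∈ Finset.Icc 1 n, ‖xi i - up n i‖) + ∑ i ∈ Finset.Icc 1 n, ‖xi i - lo n i‖
      ≤ 2 + 2 * (n * th n) := by linarith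
  have hπ4 : n * th n ≤ 2 := by
    rw [th]
    rw [show (n:ℝ) * (Real.pi / (2 * n)) = Real.pi / 2 from by field_simp]
    linarith [Real.pi_le_four]
  calc (2 * (n:ℝ))⁻¹ * ((∑ i ∈ Finset.Icc 1 n, ‖xi i - up n i‖)
        + ∑ i ∈ Finset.Icc 1 n, ‖xi i - lo n i‖)
      ≤ (2 * (n:ℝ))⁻¹ * (2 + 2 * (n * th n)) := by
        apply mul_le_mul_of_nonneg_left hsum
        positivity
    _ ≤ (2 * (n:ℝ))⁻¹ * (2 + 2 * 2) := by
        apply mul_le_mul_of_nonneg_left (by linarith)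
        positivity
    _ = 3 / n := by field_simp; ring


lemma W1_bddBelow :
    BddBelow {r | ∃ π : Measure (R2 × R2), IsCoupling (muM n) (nu n) π ∧
      ∫ p, ‖p.1 - p.2‖ ∂π = r} := by
  refine ⟨0, ?_⟩
  rintro r ⟨π, hπ, rfl⟩
  exact integral_nonneg fun p => norm_nonneg _

lemma W1_le (hn : 1 ≤ n) : W1 (muM n) (nu n) ≤ 3 / n := by
  rw [W1]
  exact (csInf_le W1_bddBelow ⟨pi1 n, pi1_coupling hn, rfl⟩).trans (cost_pi1 hn)

lemma W1_ge (hn : 1 ≤ n) : Real.sin (th n) ≤ W1 (muM n) (nu n) := by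
  rw [W1]
  refine le_csInf ⟨∫ p, ‖p.1 - p.2‖ ∂(pi1 n), ⟨pi1 n, pi1_coupling hn, rfl⟩⟩ ?_
  rintro r ⟨π, ⟨hprob, hfst, hsnd⟩, rfl⟩
  haveI := hprob
  have hae : ∀ᵐ p ∂π, (∃ i ∈ Finset.Icc 1 n, p.1 = xi i) ∧
      (∃ j ∈ Finset.Icc 1 n, p.2 = xi j + dd n ∨ p.2 = xi j - dd n) :=
    (mem_S_ae hfst).and (mem_T_ae hsnd)
  have haeN : ∀ᵐ p ∂π, ‖p.1‖ ≤ (n:ℝ) ∧ ‖p.2‖ ≤ (n:ℝ) + 1 := by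
    filter_upwards [hae] with p hp
    obtain ⟨⟨i, hi, h1⟩, ⟨j, hj, h2⟩⟩ := hp
    rw [Finset.mem_Icc] at hi hj
    have hin : (i:ℝ) ≤ n := by exact_mod_cast hi.2
    have hjn : (j:ℝ) ≤ n := by exact_mod_cast hj.2
    constructor
    · rw [h1, norm_xi]; exact hin
    · rcases h2 with h2 | h2
      · rw [h2]; exact (norm_add_le _ _).trans (by rw [norm_xi, norm_dd]; linarith)
      · rw [h2]; exact (norm_sub_le _ _).trans (by rw [norm_xi, norm_dd]; linarith)
  have hbd : ∀ (f : R2 × R2 → ℝ) (C : ℝ), Continuous f →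
      (∀ᵐ p ∂π, |f p| ≤ C) → Integrable f π := fun f C hf h =>
    Integrable.mono' (integrable_const C) hf.aestronglyMeasurable
      (by simpa [Real.norm_eq_abs] using h)
  have int1 : Integrable (fun p : R2 × R2 => ‖p.1 - p.2‖) π := by
    refine hbd _ (2*(n:ℝ)+1) (continuous_fst.sub continuous_snd).norm ?_
    filter_upwards [haeN] with p hp
    rw [abs_of_nonneg (norm_nonneg _)]
    exact (norm_sub_le _ _).trans (by linarith [hp.1, hp.2])
  have intY : Integrable (fun p : R2 × R2 => |p.2 1|) π := by
    refine hbd _ ((n:ℝ)+1) ((cont_coord 1).comp continuous_snd).abs ?_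
    filter_upwards [haeN] with p hp
    rw [abs_abs]
    exact (abs_coord_le _ _).trans hp.2
  have intX : Integrable (fun p : R2 × R2 => |p.1 1|) π := by
    refine hbd _ ((n:ℝ)) ((cont_coord 1).comp continuous_fst).abs ?_
    filter_upwards [haeN] with p hp
    rw [abs_abs]
    exact (abs_coord_le _ _).trans hp.1
  have intD : Integrable (fun p : R2 × R2 => |p.2 1| - |p.1 1|) π := by
    refine hbd _ (2*(n:ℝ)+1)
      ((((cont_coord 1).comp continuous_snd).abs).sub (((cont_coord 1).comp continuous_fst).abs)) ?_
    filter_upwards [haeN] with p hp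
    have h1 : |p.1 1| ≤ ‖p.1‖ := abs_coord_le _ _
    have h2 : |p.2 1| ≤ ‖p.2‖ := abs_coord_le _ _
    rw [abs_le]
    constructor <;> [linarith [abs_nonneg (p.2 1), abs_nonneg (p.1 1), hp.1, hp.2];
      linarith [abs_nonneg (p.2 1), abs_nonneg (p.1 1), hp.1, hp.2]]
  have hle : ∫ p, (|p.2 1| - |p.1 1|) ∂π ≤ ∫ p, ‖p.1 - p.2‖ ∂π := by
    apply integral_mono_ae intD int1
    apply Filter.Eventually.of_forall
    intro p
    show |p.2 1| - |p.1 1| ≤ ‖p.1 - p.2‖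
    have h1 : |p.2 1| - |p.1 1| ≤ |p.2 1 - p.1 1| := abs_sub_abs_le_abs_sub _ _
    have h2 : |p.2 1 - p.1 1| = |(p.2 - p.1) 1| := by rw [R2_sub_apply]
    have h3 : |(p.2 - p.1) 1| ≤ ‖p.2 - p.1‖ := abs_coord_le _ _
    have h4 : ‖p.2 - p.1‖ = ‖p.1 - p.2‖ := norm_sub_rev _ _
    linarith
  have hval : ∫ p, (|p.2 1| - |p.1 1|) ∂π = Real.sin (th n) := by
    rw [integral_sub intY intX]
    have hY : ∫ p, |p.2 1| ∂π = Real.sin (th n) := by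
      rw [show (fun p : R2 × R2 => |p.2 1|) = fun p => (fun y : R2 => |y 1|) p.2 from rfl,
        integral_snd_marg hsnd (cont_coord 1).abs]
      simp only [xi_add_dd, xi_sub_dd, pt_apply_one, abs_neg]
      rw [abs_of_nonneg (sin_th_pos hn).le]
      simp only [Finset.sum_const, Nat.card_Icc, Nat.add_sub_cancel, nsmul_eq_mul]
      have hne : (n:ℝ) ≠ 0 := by exact_mod_cast (by omega : n ≠ 0)
      field_simp
      ring
    have hX : ∫ p, |p.1 1| ∂π = 0 := by
      rw [show (fun p : R2 × R2 => |p.1 1|) = fun p => (fun y : R2 => |y 1|) p.1 from rfl,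
        integral_fst_marg hfst (cont_coord 1).abs]
      simp [xi]
    rw [hY, hX, sub_zero]
  calc Real.sin (th n) = ∫ p, (|p.2 1| - |p.1 1|) ∂π := hval.symm
    _ ≤ ∫ p, ‖p.1 - p.2‖ ∂π := hle

lemma convexOrder_mu_nu (hn : 1 ≤ n) : ConvexOrder (muM n) (nu n) := by
  intro φ hφ _ _
  rw [integral_muM, integral_nu]
  have key : ∀ i : ℕ, φ (xi i) ≤ (φ (xi i + dd n) + φ (xi i - dd n))/2 := by
    intro i
    have hx : (1/2:ℝ) • (xi i + dd n) + (1/2:ℝ) • (xi i - dd n) = xi i := by module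
    have h := hφ.2 (Set.mem_univ (xi i + dd n)) (Set.mem_univ (xi i - dd n))
      (by norm_num : (0:ℝ) ≤ 1/2) (by norm_num : (0:ℝ) ≤ 1/2) (by norm_num)
    rw [hx] at h
    simp only [smul_eq_mul] at h
    linarith
  have hn0 : (0:ℝ) < n := by exact_mod_cast (by omega : 0 < n)
  rw [← Finset.sum_add_distrib]
  calc (n:ℝ)⁻¹ * ∑ i ∈ Finset.Icc 1 n, φ (xi i)
      ≤ (n:ℝ)⁻¹ * ∑ i ∈ Finset.Icc 1 n, (φ (xi i + dd n) + φ (xi i - dd n))/2 := by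
        apply mul_le_mul_of_nonneg_left (Finset.sum_le_sum fun i _ => key i) (by positivity)
    _ = (2*(n:ℝ))⁻¹ * ∑ i ∈ Finset.Icc 1 n, (φ (xi i + dd n) + φ (xi i - dd n)) := by
        have hgen : ∀ S : ℝ, (n:ℝ)⁻¹ * (S/2) = (2*(n:ℝ))⁻¹ * S := by
          intro S
          rw [mul_inv]
          ring
        rw [← Finset.sum_div, hgen]

lemma ratio_ge (hn : 1 ≤ n) : (n:ℝ)/3 ≤
    MOTval (fun x y => ‖x - y‖) (muM n) ((muM n).bind (Pker (Real.pi / (2 * n))))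
      / W1 (muM n) ((muM n).bind (Pker (Real.pi / (2 * n)))) := by
  have h0 : (muM n).bind (Pker (Real.pi / (2 * n))) = nu n := rfl
  rw [h0, MOT_one hn]
  have hle := W1_le hn
  have hge : 0 < W1 (muM n) (nu n) := lt_of_lt_of_le (sin_th_pos hn) (W1_ge hn)
  rw [le_div_iff₀ hge]
  have hn0 : (0:ℝ) < n := by exact_mod_cast (by omega : 0 < n)
  calc (n:ℝ)/3 * W1 (muM n) (nu n) ≤ (n:ℝ)/3 * (3/n) := by
        apply mul_le_mul_of_nonneg_left hle (by positivity)
    _ = 1 := by field_simp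

end Main

/-- the ratio `M₁(μ_n, ν_{n,n}) / W₁(μ_n, ν_{n,n})` tends to `+∞`;
in particular there is no martingale Wasserstein inequality on `ℝ²`. -/
theorem stmt17 :
    Tendsto (fun n : ℕ =>
        MOTval (fun x y => ‖x - y‖) (muM n) ((muM n).bind (Pker (Real.pi / (2 * n))))
          / W1 (muM n) ((muM n).bind (Pker (Real.pi / (2 * n))))) atTop atTop
    ∧ ¬ ∃ C : ℝ, 0 < C ∧ ∀ μ ν : Measure R2,
        IsProbabilityMeasure μ → IsProbabilityMeasure ν →
        Integrable (fun x => ‖x‖) μ → Integrable (fun x => ‖x‖) ν →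
        ConvexOrder μ ν →
        MOTval (fun x y => ‖x - y‖) μ ν ≤ C * W1 μ ν := by
  constructor
  · have htend : Tendsto (fun n : ℕ => (n:ℝ)/3) atTop atTop :=
      (tendsto_natCast_atTop_atTop (R := ℝ)).atTop_div_const (by norm_num)
    refine tendsto_atTop_mono' atTop ?_ htend
    filter_upwards [eventually_ge_atTop 1] with n hn
    exact ratio_ge hn
  · rintro ⟨C, hC, h⟩
    obtain ⟨n, hn1, hn2⟩ : ∃ n : ℕ, 1 ≤ n ∧ 3 * C < n := by
      refine ⟨⌈3*C⌉₊ + 1, by omega, ?_⟩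
      push_cast
      linarith [Nat.le_ceil (3*C)]
    have hmot := h (muM n) (nu n) (isProb_muM hn1) (isProb_nu hn1)
      (integrable_muM hn1 _) (integrable_nu hn1 _) (convexOrder_mu_nu hn1)
    rw [MOT_one hn1] at hmot
    have hle := W1_le (n := n) hn1
    have hn0 : (0:ℝ) < n := by exact_mod_cast (by omega : 0 < n)
    have h1 : C * W1 (muM n) (nu n) ≤ C * (3/n) := mul_le_mul_of_nonneg_left hle hC.le
    have h2 : C * (3/(n:ℝ)) < 1 := by
      rw [show C * (3/(n:ℝ)) = (3*C)/n from by ring]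
      exact (div_lt_one hn0).2 (by linarith)
    linarith
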